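/- Let h: ℝ^{n_q} → ℝ^m be continuously differentiable with Jacobian H(q) = h'(q), let N(q) ∈ ℝ^{n_q × n} be a matrix whose columns form a basis of the nullspace of H(q) (so n_q = n + m and rank H(q) = m). Let B(q) ∈ ℝ^{n_e × n_q}, D(q,s) ∈ ℝ^{n × n_q}, and G₁, G₂ ∈ ℝ^{n_e × n_e} with rank [G₁ G₂] = n_e. If the n × 2n matrix [D(q,s)N(q) | N(q)ᵀB(q)ᵀ] has full rank n, then the block matrix Φ' with block rows [H, 0, 0, 0, 0], [B, -I, 0, 0, 0], [D, 0, NᵀBᵀ, 0, 0], [0, 0, 0, G₁, G₂] (of size (n_q + 2n_e) × (n_q + 4n_e), where the identity blocks have size n_e) has full row rank n_q + 2n_e, i.e., its kernel has dimension 2n_e. -/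

import Mathlib

open Matrix

lemma rank_eq_card_iff_li {m n : Type*} [Fintype m] [Fintype n] (A : Matrix m n ℝ) :
    A.rank = Fintype.card m ↔ LinearIndependent ℝ A.row := by
  rw [A.rank_eq_finrank_span_row, linearIndependent_iff_card_eq_finrank_span, Set.finrank, eq_comm]

lemma vecMul_eq_zero_of_rank {m n : Type*} [Fintype m] [Fintype n] {A : Matrix m n ℝ}
    (hA : A.rank = Fintype.card m) {v : m → ℝ} (hv : v ᵥ* A = 0) : v = 0 := by
  have hli := (rank_eq_card_iff_li A).mp hA
  have hinj := Matrix.vecMul_injective_iff.mpr hli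
  have : v ᵥ* A = (0 : m → ℝ) ᵥ* A := by simpa using hv
  exact hinj this

/-- Proposition 1 (rectangular case): the Jacobian `Φₗ'` with block rows
`[H 0 0 0 0]`, `[B -1 0 0 0]`, `[D 0 NᵀBᵀ 0 0]`, `[0 0 0 G₁ G₂]`
has full row rank `n_q + 2 n_e`. -/
theorem jacobian_full_row_rank
    (n m nq ne : ℕ) (hnq : nq = n + m)
    (H : Matrix (Fin m) (Fin nq) ℝ)
    (N : Matrix (Fin nq) (Fin n) ℝ)
    (B : Matrix (Fin ne) (Fin nq) ℝ)
    (D : Matrix (Fin n) (Fin nq) ℝ)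
    (G1 G2 : Matrix (Fin ne) (Fin ne) ℝ)
    (hH : H.rank = m)
    (hN : N.rank = n)
    (hHN : H * N = 0)
    (hG : (Matrix.fromCols G1 G2).rank = ne)
    (hDN : (Matrix.fromCols (D * N) (Nᵀ * Bᵀ)).rank = n) :
    (Matrix.fromRows
      (Matrix.fromCols H
        (0 : Matrix (Fin m) (Fin ne ⊕ Fin ne ⊕ Fin ne ⊕ Fin ne) ℝ))
      (Matrix.fromRows
        (Matrix.fromCols B
          (Matrix.fromCols (-1 : Matrix (Fin ne) (Fin ne) ℝ)
            (0 : Matrix (Fin ne) (Fin ne ⊕ Fin ne ⊕ Fin ne) ℝ)))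
        (Matrix.fromRows
          (Matrix.fromCols D
            (Matrix.fromCols (0 : Matrix (Fin n) (Fin ne) ℝ)
              (Matrix.fromCols (Nᵀ * Bᵀ)
                (0 : Matrix (Fin n) (Fin ne ⊕ Fin ne) ℝ))))
          (Matrix.fromCols (0 : Matrix (Fin ne) (Fin nq) ℝ)
            (Matrix.fromCols (0 : Matrix (Fin ne) (Fin ne) ℝ)
              (Matrix.fromCols (0 : Matrix (Fin ne) (Fin ne) ℝ)
                (Matrix.fromCols G1 G2))))))).rank
      = nq + 2 * ne := by
  set Φ := (Matrix.fromRows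
      (Matrix.fromCols H
        (0 : Matrix (Fin m) (Fin ne ⊕ Fin ne ⊕ Fin ne ⊕ Fin ne) ℝ))
      (Matrix.fromRows
        (Matrix.fromCols B
          (Matrix.fromCols (-1 : Matrix (Fin ne) (Fin ne) ℝ)
            (0 : Matrix (Fin ne) (Fin ne ⊕ Fin ne ⊕ Fin ne) ℝ)))
        (Matrix.fromRows
          (Matrix.fromCols D
            (Matrix.fromCols (0 : Matrix (Fin n) (Fin ne) ℝ)
              (Matrix.fromCols (Nᵀ * Bᵀ)
                (0 : Matrix (Fin n) (Fin ne ⊕ Fin ne) ℝ))))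
          (Matrix.fromCols (0 : Matrix (Fin ne) (Fin nq) ℝ)
            (Matrix.fromCols (0 : Matrix (Fin ne) (Fin ne) ℝ)
              (Matrix.fromCols (0 : Matrix (Fin ne) (Fin ne) ℝ)
                (Matrix.fromCols G1 G2))))))) with hΦ
  -- rows of Φ are linearly independent
  have hli : LinearIndependent ℝ Φ.row := by
    rw [← Matrix.vecMul_injective_iff]
    rw [Function.Injective]
    intro x y hxy
    -- reduce to: kernel is trivial
    suffices hker : ∀ v : (Fin m ⊕ (Fin ne ⊕ (Fin n ⊕ Fin ne))) → ℝ, v ᵥ* Φ = 0 → v = 0 by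
      have h0 : (x - y) ᵥ* Φ = 0 := by
        rw [Matrix.sub_vecMul, hxy, sub_self]
      exact sub_eq_zero.mp (hker _ h0)
    intro v hv
    set l : Fin m → ℝ := v ∘ Sum.inl with hl
    set μ : Fin ne → ℝ := v ∘ Sum.inr ∘ Sum.inl with hμ
    set ν : Fin n → ℝ := v ∘ Sum.inr ∘ Sum.inr ∘ Sum.inl with hν
    set ρ : Fin ne → ℝ := v ∘ Sum.inr ∘ Sum.inr ∘ Sum.inr with hρ
    have hvdecomp : v = Sum.elim l (Sum.elim μ (Sum.elim ν ρ)) := by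
      ext (i | (i | (i | i))) <;> rfl
    rw [hvdecomp, hΦ] at hv
    simp only [sumElim_vecMul_fromRows, vecMul_fromCols, Matrix.vecMul_zero] at hv
    -- extract block equations
    have h1 : l ᵥ* H + (μ ᵥ* B + ν ᵥ* D) = 0 := by
      funext j; simpa using congrFun hv (Sum.inl j)
    have h2 : μ ᵥ* (-1 : Matrix (Fin ne) (Fin ne) ℝ) + (0 + 0) = 0 := by
      funext j; simpa using congrFun hv (Sum.inr (Sum.inl j))
    have h3 : ν ᵥ* (Nᵀ * Bᵀ) + 0 = 0 := by
      funext j; simpa using congrFun hv (Sum.inr (Sum.inr (Sum.inl j)))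
    have h4 : ρ ᵥ* G1 = 0 := by
      funext j; simpa using congrFun hv (Sum.inr (Sum.inr (Sum.inr (Sum.inl j))))
    have h5 : ρ ᵥ* G2 = 0 := by
      funext j; simpa using congrFun hv (Sum.inr (Sum.inr (Sum.inr (Sum.inr j))))
    -- μ = 0
    have hμ0 : μ = 0 := by
      funext j
      have := congrFun h2 j
      simp [Matrix.vecMul_neg] at this
      simpa using this
    -- ρ = 0
    have hρ0 : ρ = 0 := by
      apply vecMul_eq_zero_of_rank (A := Matrix.fromCols G1 G2) (by simpa using hG)
      rw [vecMul_fromCols, h4, h5]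
      ext (j | j) <;> rfl
    -- ν = 0
    have h1' : l ᵥ* H + ν ᵥ* D = 0 := by
      rw [hμ0] at h1
      simpa [add_assoc] using h1
    have hDN0 : ν ᵥ* (D * N) = 0 := by
      have := congrArg (fun w => w ᵥ* N) h1'
      simp only [Matrix.add_vecMul, Matrix.vecMul_vecMul, Matrix.zero_vecMul] at this
      rw [hHN] at this
      simpa using this
    have hν0 : ν = 0 := by
      apply vecMul_eq_zero_of_rank (A := Matrix.fromCols (D * N) (Nᵀ * Bᵀ))
        (by simpa using hDN)
      rw [vecMul_fromCols, hDN0]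
      have h3' : ν ᵥ* (Nᵀ * Bᵀ) = 0 := by simpa using h3
      rw [h3']
      ext (j | j) <;> rfl
    -- l = 0
    have hl0 : l = 0 := by
      apply vecMul_eq_zero_of_rank (A := H) (by simpa using hH)
      rw [hν0] at h1'; simpa using h1'
    rw [hvdecomp, hl0, hμ0, hν0, hρ0]
    ext (i | (i | (i | i))) <;> rfl
  rw [hli.rank_matrix]
  simp [Fintype.card_sum, hnq]
  ring
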